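/- arXiv:2202.01345 — 2 statements merged into one kernel-verified Lean document; each statement's English description precedes it below -/
import Mathlib

section
/- Let m ∈ 𝓜 with d(m) < ∞ and let d be an integer with d ≥ max(d(m),1). Set S^d_m(x) = sup_{y∈[0,x]} |∫_{(0,y]} G^d_m(z) dm(z)|. Then for every integer k ≥ 1, every x ≥ 0 and every λ > 0: |((s•m•)^k G^d_m)(x)| ≤ x S^d_m(x) E^{k−1}_m(0;x); |((m•s•)^{k−1}(m•G^d_m))(x)| ≤ S^d_m(x) E^{k−1}_m(0;x); and |φ^d_m(λ;x) − 1 − Σ_{k=1}^d λ^k G^k_m(x)| ≤ x λ^{d+1} S^d_m(x) E^0_m(λ;x). -/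
open MeasureTheory Filter Topology Set
open scoped ENNReal NNReal

structure MString where
  m : ℝ → ℝ
  strict_mono : StrictMonoOn m (Set.Ioi 0)
  right_cont : ∀ x : ℝ, 0 < x → ContinuousWithinAt m (Set.Ici x) x
  μ : Measure ℝ
  stieltjes : ∀ a b : ℝ, 0 < a → a ≤ b → μ (Set.Ioc a b) = ENNReal.ofReal (m b - m a)
  int_fin : ∫⁻ x in Set.Ioc (0:ℝ) 1, ENNReal.ofReal x ∂μ < ⊤

namespace MString

noncomputable def F (S : MString) (x : ℝ) : ℝ := ∫ y in Set.Ioc (0:ℝ) x, y ∂S.μ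

noncomputable def E (S : MString) (d : ℕ) (lam x : ℝ) : ℝ :=
  (1 / (d.factorial : ℝ)) * (S.F x) ^ d * Real.exp (lam * S.F x)

noncomputable def sBul (f : ℝ → ℝ) (x : ℝ) : ℝ := ∫ y in (0:ℝ)..x, f y

noncomputable def mBul (S : MString) (f : ℝ → ℝ) (x : ℝ) : ℝ :=
  ∫ y in Set.Ioc (0:ℝ) x, f y ∂S.μ

noncomputable def smIter (S : MString) : ℕ → (ℝ → ℝ) → ℝ → ℝ
  | 0, f => f
  | (k+1), f => sBul (mBul S (smIter S k f))

noncomputable def msIter (S : MString) : ℕ → (ℝ → ℝ) → ℝ → ℝ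
  | 0, f => f
  | (k+1), f => mBul S (sBul (msIter S k f))

noncomputable def psi (S : MString) (lam x : ℝ) : ℝ :=
  ∑' k : ℕ, lam ^ k * smIter S k id x

noncomputable def psiPlus (S : MString) (lam x : ℝ) : ℝ :=
  1 + ∑' k : ℕ, lam ^ (k + 1) * mBul S (smIter S k id) x

noncomputable def g (S : MString) (lam x : ℝ) : ℝ :=
  psi S lam x * ∫ y in Set.Ioi x, (psi S lam y ^ 2)⁻¹

noncomputable def mtilde (S : MString) (x : ℝ) : ℝ := S.m x - S.m 1

noncomputable def jInt (S : MString) (f : ℝ → ℝ) (y : ℝ) : ℝ :=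
  if y ≤ 1 then ∫ z in Set.Ioc y 1, f z ∂S.μ else - ∫ z in Set.Ioc 1 y, f z ∂S.μ

noncomputable def G (S : MString) : ℕ → ℝ → ℝ
  | 0 => fun _ => 0
  | 1 => fun x => ∫ y in (0:ℝ)..x, mtilde S y
  | (k+2) => fun x => - ∫ y in (0:ℝ)..x, jInt S (G S (k+1)) y

noncomputable def GBig (S : MString) (x : ℝ) : ℝ := ∫ y in (0:ℝ)..x, S.m y

noncomputable def intGdm (S : MString) (k : ℕ) : ℝ≥0∞ :=
  ∫⁻ x in Set.Ioc (0:ℝ) 1, ENNReal.ofReal ((-1 : ℝ) ^ k * G S k x) ∂S.μ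

open scoped Classical in
noncomputable def dIdx (S : MString) : ℕ∞ :=
  if BddBelow (S.m '' Set.Ioc (0:ℝ) 1) then 0
  else sInf {n : ℕ∞ | ∃ k : ℕ, n = (k : ℕ∞) ∧ 1 ≤ k ∧ intGdm S k < ⊤}

noncomputable def phi (S : MString) (d : ℕ) (lam x : ℝ) : ℝ :=
  1 + (∑ k ∈ Finset.Icc 1 d, lam ^ k * G S k x)
    + ∑' k : ℕ, lam ^ (d + k + 1) * smIter S (k + 1) (G S d) x

noncomputable def c (S : MString) (d : ℕ) (lam : ℝ) : ℝ :=
  (phi S d lam 1 - g S lam 1) / psi S lam 1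

noncomputable def Sd (S : MString) (d : ℕ) (x : ℝ) : ℝ :=
  sSup ((fun y => |mBul S (G S d) y|) '' Set.Icc 0 x)

end MString

/-!
Write `κ_y` for the measure `t dm(t)` on `(0, y]`, so that `F y = κ_y(ℝ)`. A bound `|g| ≤ B F^j`
on `(0, y]` gives `|(m•s•g)(y)| ≤ B ∫ κ_y((-∞, w))^j dκ_y(w)`, only the half-open interval entering
because `(s•g)(w)` integrates over `z < w`. This integral is at most `κ_y(ℝ)^(j+1)/(j+1)`: under
`κ_y^⊗(j+1)` the `j+1` events "coordinate `i` is the strict maximum" are disjoint and each has this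
mass. Iterating from `|m•G^d_m| ≤ S^d_m` gives `|(m•s•)^j (m•G^d_m)| ≤ S^d_m F^j/j!`; one more `s•`
costs a factor `x`, and summing against `λ^n` produces the exponential. That `S^d_m x` really
bounds `|m•G^d_m|` on `[0, x]`, rather than being the junk `sSup` of an unbounded set, rests on the
continuity of every `G^k_m` on `(0, ∞)`.
-/

theorem lintegral_measure_Iio_pow_le {α : Type*} [LinearOrder α] [MeasurableSpace α]
    [TopologicalSpace α] [OrderClosedTopology α] [SecondCountableTopology α]
    [OpensMeasurableSpace α] (κ : Measure α) [SigmaFinite κ] (j : ℕ) :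
    (j + 1) * ∫⁻ w, κ (Iio w) ^ j ∂κ ≤ κ univ ^ (j + 1) := by
  set P := Measure.pi fun _ : Fin (j + 1) => κ
  set A : Fin (j + 1) → Set (Fin (j + 1) → α) := fun k => {x | ∀ i, i ≠ k → x i < x k}
  have hA_meas : ∀ k, MeasurableSet (A k) := fun k => by
    simp only [A, ofPred_forall]
    exact MeasurableSet.iInter fun i => MeasurableSet.iInter fun _ =>
      measurableSet_lt (measurable_pi_apply i) (measurable_pi_apply k)
  have hA_disj : Pairwise (Function.onFun Disjoint A) := fun k l hkl =>
    disjoint_left.2 fun x hk hl => lt_asymm (hk l hkl.symm) (hl k hkl)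
  have hPA : ∀ k, P (A k) = ∫⁻ w, κ (Iio w) ^ j ∂κ := by
    intro k
    have hmax_meas : MeasurableSet {p : α × (Fin j → α) | ∀ i, p.2 i < p.1} := by
      simp only [ofPred_forall]
      exact MeasurableSet.iInter fun i =>
        measurableSet_lt ((measurable_pi_apply i).comp measurable_snd) measurable_fst
    have hpre : A k = MeasurableEquiv.piFinSuccAbove (fun _ => α) k ⁻¹'
        {p : α × (Fin j → α) | ∀ i, p.2 i < p.1} := by
      ext x
      simp [A, MeasurableEquiv.piFinSuccAbove_apply, Fin.forall_iff_succAbove k, Fin.removeNth]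
    rw [hpre, (measurePreserving_piFinSuccAbove (fun _ => κ) k).measure_preimage
      hmax_meas.nullMeasurableSet, Measure.prod_apply hmax_meas]
    congr 1 with w
    have : {y : Fin j → α | ∀ i, y i < w} = Set.pi univ fun _ => Iio w := by ext; simp
    simp only [preimage_ofPred_eq, this, Measure.pi_pi, Finset.prod_const, Finset.card_univ,
      Fintype.card_fin]
  calc (j + 1) * ∫⁻ w, κ (Iio w) ^ j ∂κ = ∑ k, P (A k) := by simp [hPA]
    _ = P (⋃ k, A k) := by rw [measure_iUnion hA_disj hA_meas, tsum_fintype]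
    _ ≤ P univ := measure_mono (subset_univ _)
    _ = κ univ ^ (j + 1) := by simp [P, Measure.pi_univ]

theorem toReal_lintegral_measure_Iio_pow_le {α : Type*} [LinearOrder α] [MeasurableSpace α]
    [TopologicalSpace α] [OrderClosedTopology α] [SecondCountableTopology α]
    [OpensMeasurableSpace α] (κ : Measure α) [IsFiniteMeasure κ] (j : ℕ) :
    (∫⁻ w, κ (Iio w) ^ j ∂κ).toReal ≤ κ.real univ ^ (j + 1) / (j + 1) := by
  rw [le_div_iff₀' (by positivity), measureReal_def, ← ENNReal.toReal_pow]
  have h := ENNReal.toReal_mono (by finiteness) (lintegral_measure_Iio_pow_le κ j)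
  rwa [ENNReal.toReal_mul] at h

theorem continuousOn_primitive_Ioi {h : ℝ → ℝ}
    (hh : ∀ a b : ℝ, 0 < a → 0 < b → IntervalIntegrable h volume a b) :
    ContinuousOn (fun x => ∫ t in (0 : ℝ)..x, h t) (Ioi 0) := by
  by_cases h0 : IntervalIntegrable h volume 0 1
  · intro z (hz : 0 < z)
    have hint := h0.trans (hh 1 (z + 1) one_pos (by linarith))
    refine ((intervalIntegral.continuousOn_primitive_interval' hint left_mem_uIcc).continuousAt
      ?_).continuousWithinAt
    rw [uIcc_of_le (by linarith)]
    exact Icc_mem_nhds hz (by linarith)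
  · exact continuousOn_const.congr fun z hz =>
      intervalIntegral.integral_undef fun hz0 => h0 (hz0.trans (hh z 1 hz one_pos))

theorem antitoneOn_intervalIntegral_of_nonneg {μ : Measure ℝ} {h : ℝ → ℝ} {c : ℝ}
    (hh : ∀ a b : ℝ, 0 < a → 0 < b → IntervalIntegrable h μ a b) (hc : 0 < c) (h0 : 0 ≤ h) :
    AntitoneOn (fun w => ∫ z in w..c, h z ∂μ) (Ioi 0) := by
  intro u (hu : 0 < u) v (hv : 0 < v) huv
  show ∫ z in v..c, h z ∂μ ≤ ∫ z in u..c, h z ∂μ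
  rw [← intervalIntegral.integral_add_adjacent_intervals (hh u v hu hv) (hh v c hv hc)]
  exact le_add_of_nonneg_left (intervalIntegral.integral_nonneg huv fun z _ => h0 z)

namespace MString

theorem abs_sBul_le {g : ℝ → ℝ} {w B : ℝ} (hw : 0 ≤ w) (hg : ∀ z ∈ Ioo 0 w, |g z| ≤ B) :
    |sBul g w| ≤ B * w := by
  have hae : ∀ᵐ z, z ∈ uIoc 0 w → ‖g z‖ ≤ B := by
    filter_upwards [volume.ae_ne w] with z hzw hz
    rw [uIoc_of_le hw] at hz
    exact hg z ⟨hz.1, hz.2.lt_of_ne hzw⟩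
  simpa [sBul, abs_of_nonneg hw] using intervalIntegral.norm_integral_le_of_norm_le_const_ae hae

variable (S : MString)

theorem measure_Ioc_lt_top {a b : ℝ} (ha : 0 < a) : S.μ (Ioc a b) < ⊤ := by
  rcases le_total a b with h | h
  · rw [S.stieltjes a b ha h]; exact ENNReal.ofReal_lt_top
  · simp [Ioc_eq_empty_of_le h]

theorem intervalIntegrable_of_continuousOn {g : ℝ → ℝ} (hg : ContinuousOn g (Ioi 0)) {a b : ℝ}
    (ha : 0 < a) (hb : 0 < b) : IntervalIntegrable g S.μ a b := by
  have hsub : Icc (min a b) (max a b) ⊆ Ioi 0 := fun z hz => (lt_min ha hb).trans_le hz.1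
  obtain ⟨C, hC⟩ := isCompact_Icc.exists_bound_of_continuousOn (hg.mono hsub)
  rw [intervalIntegrable_iff, uIoc]
  refine IntegrableOn.of_bound (S.measure_Ioc_lt_top (lt_min ha hb))
    ((hg.mono (Ioc_subset_Icc_self.trans hsub)).aestronglyMeasurable measurableSet_Ioc) C ?_
  exact (ae_restrict_iff' measurableSet_Ioc).2
    (ae_of_all _ fun z hz => hC z (Ioc_subset_Icc_self hz))

theorem jInt_eq_intervalIntegral (g : ℝ → ℝ) (y : ℝ) : S.jInt g y = ∫ z in y..1, g z ∂S.μ := by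
  unfold jInt
  split_ifs with hy
  · rw [intervalIntegral.integral_of_le hy]
  · rw [intervalIntegral.integral_of_ge (not_le.1 hy).le]

theorem jInt_intervalIntegrable {g : ℝ → ℝ}
    (hg : ∀ a b : ℝ, 0 < a → 0 < b → IntervalIntegrable g S.μ a b) {a b : ℝ} (ha : 0 < a)
    (hb : 0 < b) : IntervalIntegrable (S.jInt g) volume a b := by
  -- `g = (g + |g|) - |g|` writes `jInt g` as a difference of two antitone functions
  have hsub : uIcc a b ⊆ Ioi 0 := fun z hz => (lt_min ha hb).trans_le hz.1
  have hpos := antitoneOn_intervalIntegral_of_nonneg (fun u v hu hv => (hg u v hu hv).add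
    (hg u v hu hv).abs) one_pos fun z => neg_le_iff_add_nonneg.1 (neg_abs_le (g z))
  have hneg := antitoneOn_intervalIntegral_of_nonneg (fun u v hu hv => (hg u v hu hv).abs)
    one_pos fun z => abs_nonneg (g z)
  refine ((hpos.mono hsub).intervalIntegrable.sub (hneg.mono hsub).intervalIntegrable).congr
    fun w hw => ?_
  have hw0 : 0 < w := hsub (uIoc_subset_uIcc hw)
  have hw1 := hg w 1 hw0 one_pos
  simp only [jInt_eq_intervalIntegral, ← intervalIntegral.integral_sub (hw1.add hw1.abs) hw1.abs,
    add_sub_cancel_right]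

theorem monotoneOn_mtilde : MonotoneOn S.mtilde (Ioi 0) := fun _ hu _ hv huv =>
  sub_le_sub_right (S.strict_mono.monotoneOn hu hv huv) _

theorem continuousOn_G (k : ℕ) : ContinuousOn (S.G k) (Ioi 0) := by
  induction k with
  | zero => exact continuousOn_const
  | succ k ih =>
    cases k with
    | zero => exact continuousOn_primitive_Ioi fun a b ha hb =>
        (S.monotoneOn_mtilde.mono fun z hz => (lt_min ha hb).trans_le hz.1).intervalIntegrable
    | succ k => exact (continuousOn_primitive_Ioi fun a b ha hb => S.jInt_intervalIntegrable
        (fun u v hu hv => S.intervalIntegrable_of_continuousOn ih hu hv) ha hb).neg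

theorem abs_mBul_le_of_continuousOn {g : ℝ → ℝ} (hg : ContinuousOn g (Ioi 0)) {x y : ℝ}
    (hy : y ∈ Icc 0 x) : |S.mBul g y| ≤ ∫ z in Ioc 0 x, |g z| ∂S.μ := by
  by_cases hint : IntegrableOn g (Ioc 0 x) S.μ
  · calc |S.mBul g y| ≤ ∫ z in Ioc 0 y, |g z| ∂S.μ := abs_integral_le_integral_abs
      _ ≤ ∫ z in Ioc 0 x, |g z| ∂S.μ := setIntegral_mono_set hint.abs
          (ae_of_all _ fun z => abs_nonneg _) (Ioc_subset_Ioc le_rfl hy.2).eventuallyLE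
  · -- a continuous `g` is integrable on `(y, x]`, so `g` is not integrable on `(0, y]` either
    have hzero : S.mBul g y = 0 := by
      rcases hy.1.eq_or_lt with rfl | hy0
      · simp [mBul]
      · refine integral_undef fun hy' => hint ?_
        rw [← Ioc_union_Ioc_eq_Ioc hy.1 hy.2]
        exact IntegrableOn.union hy' (intervalIntegrable_iff_integrableOn_Ioc_of_le hy.2 |>.1
          (S.intervalIntegrable_of_continuousOn hg hy0 (hy0.trans_le hy.2)))
    rw [hzero, abs_zero]
    exact integral_nonneg fun z => abs_nonneg _

theorem abs_mBul_G_le_Sd (d : ℕ) {x y : ℝ} (hy : y ∈ Icc 0 x) : |S.mBul (S.G d) y| ≤ S.Sd d x :=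
  le_csSup ⟨_, forall_mem_image.2 fun _ hz => S.abs_mBul_le_of_continuousOn (S.continuousOn_G d) hz⟩
    (mem_image_of_mem _ hy)

noncomputable def weight (y : ℝ) : Measure ℝ :=
  (S.μ.restrict (Ioc 0 y)).withDensity fun t => ENNReal.ofReal t

theorem weight_apply (y : ℝ) {s : Set ℝ} (hs : MeasurableSet s) :
    S.weight y s = ∫⁻ t in s ∩ Ioc 0 y, ENNReal.ofReal t ∂S.μ := by
  rw [weight, withDensity_apply _ hs, Measure.restrict_restrict hs]

theorem lintegral_Ioc_ofReal_lt_top (y : ℝ) : ∫⁻ t in Ioc 0 y, ENNReal.ofReal t ∂S.μ < ⊤ := by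
  calc ∫⁻ t in Ioc 0 y, ENNReal.ofReal t ∂S.μ
      ≤ (∫⁻ t in Ioc 0 1, ENNReal.ofReal t ∂S.μ) + ∫⁻ t in Ioc 1 y, ENNReal.ofReal t ∂S.μ :=
        (lintegral_mono_set (Ioc_subset_Ioc_union_Ioc)).trans (lintegral_union_le _ _ _)
    _ ≤ (∫⁻ t in Ioc 0 1, ENNReal.ofReal t ∂S.μ) + ENNReal.ofReal y * S.μ (Ioc 1 y) := by
        gcongr
        exact (setLIntegral_mono measurable_const fun t ht =>
          ENNReal.ofReal_le_ofReal ht.2).trans_eq (setLIntegral_const _ _)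
    _ < ⊤ := ENNReal.add_lt_top.2 ⟨S.int_fin, ENNReal.mul_lt_top ENNReal.ofReal_lt_top
        (S.measure_Ioc_lt_top one_pos)⟩

instance (y : ℝ) : IsFiniteMeasure (S.weight y) :=
  ⟨by simpa [S.weight_apply y MeasurableSet.univ] using S.lintegral_Ioc_ofReal_lt_top y⟩

theorem F_eq_toReal_lintegral (y : ℝ) :
    S.F y = (∫⁻ t in Ioc 0 y, ENNReal.ofReal t ∂S.μ).toReal :=
  integral_eq_lintegral_of_nonneg_ae
    ((ae_restrict_iff' measurableSet_Ioc).2 (ae_of_all _ fun _ ht => ht.1.le))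
    aestronglyMeasurable_id

theorem F_nonneg (y : ℝ) : 0 ≤ S.F y := by
  rw [F_eq_toReal_lintegral]; exact ENNReal.toReal_nonneg

theorem F_le_weight_Iio {z w y : ℝ} (hzw : z < w) (hwy : w ≤ y) :
    S.F z ≤ (S.weight y (Iio w)).toReal := by
  rw [F_eq_toReal_lintegral]
  refine ENNReal.toReal_mono (measure_ne_top _ _) ?_
  rw [S.weight_apply y measurableSet_Iio]
  exact lintegral_mono_set fun t ht => ⟨ht.2.trans_lt hzw, ht.1, ht.2.trans (hzw.le.trans hwy)⟩

theorem F_mono : Monotone S.F := fun y z hyz => by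
  rw [F_eq_toReal_lintegral, F_eq_toReal_lintegral]
  exact ENNReal.toReal_mono (S.lintegral_Ioc_ofReal_lt_top z).ne
    (lintegral_mono_set (Ioc_subset_Ioc_right hyz))

theorem F_eq_weight_real_univ (y : ℝ) : S.F y = (S.weight y).real univ := by
  rw [F_eq_toReal_lintegral, measureReal_def, S.weight_apply y MeasurableSet.univ, univ_inter]

theorem abs_mBul_sBul_le {g : ℝ → ℝ} {y B : ℝ} {j : ℕ} (hB : 0 ≤ B)
    (hg : ∀ z ∈ Ioc 0 y, |g z| ≤ B * S.F z ^ j) :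
    |S.mBul (sBul g) y| ≤ B * (S.F y ^ (j + 1) / (j + 1)) := by
  set κ := S.weight y
  have hmeas : Measurable fun w => κ (Iio w) ^ j :=
    (Monotone.measurable fun _ _ h => measure_mono (Iio_subset_Iio h)).pow_const j
  have hpt : ∀ w ∈ Ioc 0 y, ENNReal.ofReal ‖sBul g w‖
      ≤ ENNReal.ofReal w * (ENNReal.ofReal B * κ (Iio w) ^ j) := by
    intro w hw
    have h := abs_sBul_le (B := B * (κ (Iio w)).toReal ^ j) hw.1.le fun z hz =>
      (hg z ⟨hz.1, hz.2.le.trans hw.2⟩).trans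
        (by gcongr; exacts [S.F_nonneg z, S.F_le_weight_Iio hz.2 hw.2])
    rw [Real.norm_eq_abs, ← ENNReal.ofReal_toReal (measure_ne_top κ (Iio w)), ← ENNReal.ofReal_pow
      ENNReal.toReal_nonneg, ← ENNReal.ofReal_mul hB, ← ENNReal.ofReal_mul hw.1.le]
    exact ENNReal.ofReal_le_ofReal (h.trans_eq (mul_comm _ _))
  have hlint : ∫⁻ w in Ioc 0 y, ENNReal.ofReal ‖sBul g w‖ ∂S.μ
      ≤ ENNReal.ofReal B * ∫⁻ w, κ (Iio w) ^ j ∂κ :=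
    calc ∫⁻ w in Ioc 0 y, ENNReal.ofReal ‖sBul g w‖ ∂S.μ
        ≤ ∫⁻ w in Ioc 0 y, ENNReal.ofReal w * (ENNReal.ofReal B * κ (Iio w) ^ j) ∂S.μ :=
          setLIntegral_mono (by fun_prop) hpt
      _ = ∫⁻ w, ENNReal.ofReal B * κ (Iio w) ^ j ∂κ :=
          (lintegral_withDensity_eq_lintegral_mul _ ENNReal.measurable_ofReal
            (hmeas.const_mul _)).symm
      _ = ENNReal.ofReal B * ∫⁻ w, κ (Iio w) ^ j ∂κ := lintegral_const_mul _ hmeas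
  have hfin : ∫⁻ w, κ (Iio w) ^ j ∂κ ≠ ⊤ := ((lintegral_mono fun w =>
    pow_le_pow_left' (measure_mono (subset_univ (Iio w))) j).trans_lt (by simp; finiteness)).ne
  calc |S.mBul (sBul g) y| ≤ (∫⁻ w in Ioc 0 y, ENNReal.ofReal ‖sBul g w‖ ∂S.μ).toReal :=
        (Real.norm_eq_abs _).symm.trans_le (norm_integral_le_lintegral_norm _)
    _ ≤ B * (∫⁻ w, κ (Iio w) ^ j ∂κ).toReal := by
        rw [← ENNReal.toReal_ofReal hB, ← ENNReal.toReal_mul]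
        exact ENNReal.toReal_mono (ENNReal.mul_ne_top ENNReal.ofReal_ne_top hfin) hlint
    _ ≤ B * (S.F y ^ (j + 1) / (j + 1)) := by
        rw [S.F_eq_weight_real_univ]
        exact mul_le_mul_of_nonneg_left (toReal_lintegral_measure_Iio_pow_le κ j) hB

theorem abs_msIter_mBul_le {f : ℝ → ℝ} {x C : ℝ} (hC : 0 ≤ C)
    (hf : ∀ y ∈ Icc 0 x, |S.mBul f y| ≤ C) (j : ℕ) :
    ∀ y ∈ Icc 0 x, |S.msIter j (S.mBul f) y| ≤ C * S.F y ^ j / j.factorial := by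
  induction j with
  | zero => simpa [msIter] using hf
  | succ j ih =>
    intro y hy
    have h := S.abs_mBul_sBul_le (B := C / j.factorial) (by positivity) fun z hz =>
      (ih z ⟨hz.1.le, hz.2.trans hy.2⟩).trans_eq (mul_div_right_comm _ _ _)
    calc |S.msIter (j + 1) (S.mBul f) y| = |S.mBul (sBul (S.msIter j (S.mBul f))) y| := rfl
      _ ≤ C / j.factorial * (S.F y ^ (j + 1) / (j + 1)) := h
      _ = C * S.F y ^ (j + 1) / (j + 1).factorial := by
        rw [Nat.factorial_succ]; push_cast; field_simp

theorem mBul_smIter (f : ℝ → ℝ) (j : ℕ) : S.mBul (S.smIter j f) = S.msIter j (S.mBul f) := by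
  induction j with
  | zero => rfl
  | succ j ih => exact congrArg (fun h => S.mBul (sBul h)) ih

theorem abs_smIter_succ_le {f : ℝ → ℝ} {x C : ℝ} (hx : 0 ≤ x) (hC : 0 ≤ C)
    (hf : ∀ y ∈ Icc 0 x, |S.mBul f y| ≤ C) (j : ℕ) :
    |S.smIter (j + 1) f x| ≤ x * (C * S.F x ^ j / j.factorial) := by
  rw [smIter, mBul_smIter, mul_comm]
  refine abs_sBul_le hx fun z hz => (S.abs_msIter_mBul_le hC hf j z ⟨hz.1.le, hz.2.le⟩).trans ?_
  gcongr
  exacts [S.F_nonneg z, S.F_mono hz.2.le]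

theorem abs_tsum_smIter_le {f : ℝ → ℝ} {x C lam : ℝ} (hx : 0 ≤ x) (hC : 0 ≤ C)
    (hf : ∀ y ∈ Icc 0 x, |S.mBul f y| ≤ C) (hlam : 0 ≤ lam) (d : ℕ) :
    |∑' n : ℕ, lam ^ (d + n + 1) * S.smIter (n + 1) f x|
      ≤ x * lam ^ (d + 1) * C * Real.exp (lam * S.F x) := by
  have hexp := (NormedSpace.expSeries_div_hasSum_exp (lam * S.F x)).mul_left
    (x * lam ^ (d + 1) * C)
  rw [← Real.exp_eq_exp_ℝ] at hexp
  rw [← Real.norm_eq_abs]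
  refine tsum_of_norm_bounded hexp fun n => ?_
  rw [Real.norm_eq_abs, abs_mul, abs_of_nonneg (by positivity)]
  calc lam ^ (d + n + 1) * |S.smIter (n + 1) f x|
      ≤ lam ^ (d + n + 1) * (x * (C * S.F x ^ n / n.factorial)) := by
        gcongr; exact S.abs_smIter_succ_le hx hC hf n
    _ = x * lam ^ (d + 1) * C * ((lam * S.F x) ^ n / n.factorial) := by ring

end MString

theorem stmt3_general (S : MString) (d : ℕ) (k : ℕ) (hk : 1 ≤ k) (x lam : ℝ) (hx : 0 ≤ x)
    (hlam : 0 < lam) :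
    |MString.smIter S k (MString.G S d) x| ≤ x * MString.Sd S d x * MString.E S (k - 1) 0 x ∧
    |MString.msIter S (k - 1) (MString.mBul S (MString.G S d)) x|
      ≤ MString.Sd S d x * MString.E S (k - 1) 0 x ∧
    |MString.phi S d lam x - 1 - ∑ i ∈ Finset.Icc 1 d, lam ^ i * MString.G S i x|
      ≤ x * lam ^ (d + 1) * MString.Sd S d x * MString.E S 0 lam x := by
  have hbase : ∀ y ∈ Icc 0 x, |S.mBul (S.G d) y| ≤ S.Sd d x := fun y hy => S.abs_mBul_G_le_Sd d hy
  have hSd : 0 ≤ S.Sd d x := (abs_nonneg _).trans (hbase 0 ⟨le_rfl, hx⟩)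
  obtain ⟨j, rfl⟩ := Nat.exists_eq_add_of_le' hk
  have hE : ∀ j, S.E j 0 x = S.F x ^ j / j.factorial := fun j => by simp [MString.E]; ring
  simp only [Nat.add_sub_cancel, hE]
  refine ⟨?_, ?_, ?_⟩
  · exact (S.abs_smIter_succ_le hx hSd hbase j).trans_eq (by ring)
  · exact (S.abs_msIter_mBul_le hSd hbase j x ⟨hx, le_rfl⟩).trans_eq (by ring)
  · have htail : S.phi d lam x - 1 - ∑ i ∈ Finset.Icc 1 d, lam ^ i * S.G i x
        = ∑' n : ℕ, lam ^ (d + n + 1) * S.smIter (n + 1) (S.G d) x := by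
      rw [MString.phi]; ring
    rw [htail, MString.E]
    simpa using S.abs_tsum_smIter_le hx hSd hbase hlam.le d

theorem stmt3 (S : MString) (hfin : MString.dIdx S < ⊤) (d : ℕ) (hd1 : 1 ≤ d)
    (hdm : MString.dIdx S ≤ (d : ℕ∞)) (k : ℕ) (hk : 1 ≤ k) (x lam : ℝ) (hx : 0 ≤ x)
    (hlam : 0 < lam) :
    |MString.smIter S k (MString.G S d) x| ≤ x * MString.Sd S d x * MString.E S (k - 1) 0 x ∧
    |MString.msIter S (k - 1) (MString.mBul S (MString.G S d)) x|
      ≤ MString.Sd S d x * MString.E S (k - 1) 0 x ∧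
    |MString.phi S d lam x - 1 - ∑ i ∈ Finset.Icc 1 d, lam ^ i * MString.G S i x|
      ≤ x * lam ^ (d + 1) * MString.Sd S d x * MString.E S 0 lam x :=
  stmt3_general S d k hk x lam hx hlam
end

section
/- Let m ∈ 𝓜, let k ≥ 1 be an integer and let 0 ≤ x ≤ y ≤ 1. Then 0 ≤ (−1)^{k+1} G^{k+1}_m(x) ≤ (−1)^k G^k_m(x) ∫_{(0,y]} z dm(z) + x ∫_{(y,1]} (−1)^k G^k_m(z) dm(z). In particular (taking y = 1), 0 ≤ (−1)^{k+1} G^{k+1}_m(x) ≤ (−1)^k G^k_m(x) ∫_{(0,1]} z dm(z). -/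
open MeasureTheory Filter Topology Set
open scoped ENNReal NNReal

/-!
Write `g_k = (-1)^k G^k_m`. For `k ≥ 1`, `g_k` is on `[0, 1]` the primitive of a nonnegative
antitone density: `u ↦ m(1) - m(u)` for `k = 1` and `u ↦ ∫_{(u,1]} g_{k-1} dm` afterwards, the
latter being nonnegative and antitone because `g_{k-1}` is nonnegative. Hence every `g_k` is
nonnegative, nondecreasing, and concave with `g_k(0) = 0`, so `x g_k(z) ≤ z g_k(x)` for `x ≤ z`.

For the estimate, split `∫_{(u,1]} g_k dm` at `x` and `y`. On `(u, x]` monotonicity bounds it by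
`g_k(x) (m(x) - m(u))`, which integrates over `u ∈ (0, x]` to `g_k(x) ∫_{(0,x]} z dm(z)` by Fubini;
on `(x, y]` the bound `x g_k(z) ≤ z g_k(x)` gives `g_k(x) ∫_{(x,y]} z dm(z)`.
-/

theorem IntervalIntegrable.of_subinterval {μ : Measure ℝ} {f : ℝ → ℝ} {a b c d : ℝ}
    (hint : IntervalIntegrable f μ a b) (hac : a ≤ c) (hcd : c ≤ d) (hdb : d ≤ b) :
    IntervalIntegrable f μ c d :=
  hint.mono_set (by
    rw [uIcc_of_le hcd, uIcc_of_le (hac.trans (hcd.trans hdb))]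
    exact Icc_subset_Icc hac hdb)

section Primitive

variable {w : ℝ → ℝ} {b : ℝ}

theorem monotoneOn_primitive (hw : ∀ u ∈ Ioc 0 b, 0 ≤ w u)
    (hint : IntervalIntegrable w volume 0 b) :
    MonotoneOn (fun x => ∫ u in 0..x, w u) (Icc 0 b) := fun _ hx _ hz hxz =>
  intervalIntegral.integral_mono_interval le_rfl hx.1 hxz
    ((ae_restrict_iff' measurableSet_Ioc).2 (ae_of_all _ fun u hu => hw u ⟨hu.1, hu.2.trans hz.2⟩))
    (hint.of_subinterval le_rfl hz.1 hz.2)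

theorem primitive_nonneg (hw : ∀ u ∈ Ioc 0 b, 0 ≤ w u)
    (hint : IntervalIntegrable w volume 0 b) {x : ℝ} (hx : x ∈ Icc 0 b) :
    0 ≤ ∫ u in 0..x, w u := by
  simpa using monotoneOn_primitive hw hint ⟨le_rfl, hx.1.trans hx.2⟩ hx hx.1

theorem mul_primitive_le (hanti : AntitoneOn w (Ioc 0 b))
    (hint : IntervalIntegrable w volume 0 b) {x z : ℝ} (hx : 0 ≤ x) (hxz : x ≤ z) (hzb : z ≤ b) :
    x * ∫ u in 0..z, w u ≤ z * ∫ u in 0..x, w u := by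
  rcases hx.eq_or_lt with rfl | hx0
  · simp
  have hxb : x ∈ Ioc 0 b := ⟨hx0, hxz.trans hzb⟩
  have hsplit : ∫ u in 0..z, w u = (∫ u in 0..x, w u) + ∫ u in x..z, w u :=
    (intervalIntegral.integral_add_adjacent_intervals (hint.of_subinterval le_rfl hx hxb.2)
      (hint.of_subinterval hx hxz hzb)).symm
  have hupper : ∫ u in x..z, w u ≤ (z - x) * w x := by
    simpa using intervalIntegral.integral_mono_on hxz (hint.of_subinterval hx hxz hzb)
      intervalIntegrable_const fun u hu => hanti hxb ⟨hx0.trans_le hu.1, hu.2.trans hzb⟩ hu.1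
  have hlower : x * w x ≤ ∫ u in 0..x, w u := by
    simpa using intervalIntegral.integral_mono_on_of_le_Ioo hx intervalIntegrable_const
      (hint.of_subinterval le_rfl hx hxb.2)
      fun u hu => hanti ⟨hu.1, hu.2.le.trans hxb.2⟩ hxb hu.2.le
  rw [hsplit]
  nlinarith [mul_le_mul_of_nonneg_left hupper hx,
    mul_le_mul_of_nonneg_left hlower (sub_nonneg.2 hxz)]

end Primitive

theorem setIntegral_Ioc_add_Ioc {μ : Measure ℝ} {f : ℝ → ℝ} {a b c : ℝ} (hab : a ≤ b) (hbc : b ≤ c)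
    (hf : IntegrableOn f (Ioc a c) μ) :
    ∫ t in Ioc a b, f t ∂μ + ∫ t in Ioc b c, f t ∂μ = ∫ t in Ioc a c, f t ∂μ := by
  rw [← setIntegral_union (Ioc_disjoint_Ioc_of_le le_rfl) measurableSet_Ioc
    (hf.mono_set (Ioc_subset_Ioc_right hbc)) (hf.mono_set (Ioc_subset_Ioc_left hab)),
    Ioc_union_Ioc_eq_Ioc hab hbc]

namespace MString

variable (S : MString)

theorem m_le_m {a b : ℝ} (ha : 0 < a) (hab : a ≤ b) : S.m a ≤ S.m b :=
  S.strict_mono.monotoneOn ha (ha.trans_le hab) hab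

theorem measureReal_Ioc {a b : ℝ} (ha : 0 < a) (hab : a ≤ b) :
    S.μ.real (Ioc a b) = S.m b - S.m a := by
  rw [measureReal_def, S.stieltjes a b ha hab,
    ENNReal.toReal_ofReal (sub_nonneg.2 (S.m_le_m ha hab))]

theorem measure_Ioc_ne_top {a b : ℝ} (ha : 0 < a) : S.μ (Ioc a b) ≠ ⊤ := by
  rcases le_or_gt a b with hab | hba
  · rw [S.stieltjes a b ha hab]
    exact ENNReal.ofReal_ne_top
  · simp [Ioc_eq_empty_of_le hba.le]

theorem integrableOn_Ioc_of_monotoneOn {f : ℝ → ℝ} {a b : ℝ} (ha : 0 < a)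
    (hf : MonotoneOn f (Icc a b)) : IntegrableOn f (Ioc a b) S.μ := by
  rcases le_or_gt a b with hab | hba
  · have hIcc : S.μ (Icc a b) ≠ ⊤ := ne_top_of_le_ne_top (S.measure_Ioc_ne_top (half_pos ha))
      (measure_mono (Icc_subset_Ioc_iff hab |>.2 ⟨half_lt_self ha, le_rfl⟩))
    exact (hf.integrableOn_of_measure_ne_top (isLeast_Icc hab) (isGreatest_Icc hab) hIcc
      measurableSet_Icc).mono_set Ioc_subset_Icc_self
  · simp [Ioc_eq_empty_of_le hba.le]

theorem setIntegral_Ioc_le_of_monotoneOn {f : ℝ → ℝ} {a b : ℝ} (ha : 0 < a) (hab : a ≤ b)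
    (hf : MonotoneOn f (Icc a b)) : ∫ z in Ioc a b, f z ∂S.μ ≤ f b * (S.m b - S.m a) := by
  calc ∫ z in Ioc a b, f z ∂S.μ ≤ ∫ _ in Ioc a b, f b ∂S.μ :=
        setIntegral_mono_on (S.integrableOn_Ioc_of_monotoneOn ha hf)
          (integrableOn_const (S.measure_Ioc_ne_top ha)) measurableSet_Ioc
          fun _ hz => hf (Ioc_subset_Icc_self hz) ⟨hab, le_rfl⟩ hz.2
    _ = f b * (S.m b - S.m a) := by
        rw [setIntegral_const, S.measureReal_Ioc ha hab, smul_eq_mul, mul_comm]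

theorem integrableOn_id : IntegrableOn (fun z : ℝ => z) (Ioc 0 1) S.μ :=
  ⟨measurable_id.aestronglyMeasurable, (hasFiniteIntegral_iff_ofReal
    ((ae_restrict_iff' measurableSet_Ioc).2 (ae_of_all _ fun _ hz => hz.1.le))).2 S.int_fin⟩

theorem lintegral_m_sub_m (x : ℝ) :
    ∫⁻ u in Ioc 0 x, ENNReal.ofReal (S.m x - S.m u) = ∫⁻ z in Ioc 0 x, ENNReal.ofReal z ∂S.μ := by
  have hlayer : ∫⁻ z in Ioc 0 x, ENNReal.ofReal z ∂S.μ =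
      ∫⁻ t in Ioi 0, S.μ.restrict (Ioc 0 x) {z | t < z} :=
    lintegral_eq_lintegral_meas_lt _
      ((ae_restrict_iff' measurableSet_Ioc).2 (ae_of_all _ fun _ hz => hz.1.le)) aemeasurable_id
  have hmeas : ∀ t ∈ Ioi (0 : ℝ), S.μ.restrict (Ioc 0 x) {z | t < z} =
      (Ioc 0 x).indicator (fun t => ENNReal.ofReal (S.m x - S.m t)) t := by
    intro t ht
    rw [show {z | t < z} = Ioi t from rfl, Measure.restrict_apply measurableSet_Ioi,
      inter_comm, Ioc_inter_Ioi, sup_eq_right.2 (le_of_lt ht)]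
    by_cases htx : t ≤ x
    · rw [indicator_of_mem (show t ∈ Ioc 0 x from ⟨ht, htx⟩), S.stieltjes t x ht htx]
    · rw [indicator_of_notMem fun h => htx h.2, Ioc_eq_empty_of_le (not_le.1 htx).le,
        measure_empty]
  rw [hlayer, setLIntegral_congr_fun measurableSet_Ioi hmeas, lintegral_indicator measurableSet_Ioc,
    Measure.restrict_restrict measurableSet_Ioc, inter_eq_left.2 Ioc_subset_Ioi_self]

theorem m_sub_m_nonneg_ae {x : ℝ} :
    0 ≤ᵐ[volume.restrict (Ioc 0 x)] fun u => S.m x - S.m u :=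
  (ae_restrict_iff' measurableSet_Ioc).2 (ae_of_all _ fun _ hu =>
    sub_nonneg.2 (S.m_le_m hu.1 hu.2))

theorem integrableOn_m_sub_m {x : ℝ} (hx1 : x ≤ 1) :
    IntegrableOn (fun u => S.m x - S.m u) (Ioc 0 x) := by
  refine ⟨(aemeasurable_const.sub (aemeasurable_restrict_of_monotoneOn measurableSet_Ioc
    (S.strict_mono.monotoneOn.mono Ioc_subset_Ioi_self))).aestronglyMeasurable, ?_⟩
  rw [hasFiniteIntegral_iff_ofReal S.m_sub_m_nonneg_ae, S.lintegral_m_sub_m]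
  exact (lintegral_mono_set (Ioc_subset_Ioc_right hx1)).trans_lt S.int_fin

theorem integral_m_sub_m {x : ℝ} (hx : 0 ≤ x) (hx1 : x ≤ 1) :
    ∫ u in 0..x, (S.m x - S.m u) = S.F x := by
  rw [intervalIntegral.integral_of_le hx, F,
    integral_eq_lintegral_of_nonneg_ae S.m_sub_m_nonneg_ae
      (S.integrableOn_m_sub_m hx1).aestronglyMeasurable, S.lintegral_m_sub_m]
  have hid : 0 ≤ᵐ[S.μ.restrict (Ioc 0 x)] fun z : ℝ => z :=
    (ae_restrict_iff' measurableSet_Ioc).2 (ae_of_all _ fun _ hz => hz.1.le)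
  exact (integral_eq_lintegral_of_nonneg_ae hid measurable_id.aestronglyMeasurable).symm

theorem F_eq_add {x y : ℝ} (hx : 0 ≤ x) (hxy : x ≤ y) (hy : y ≤ 1) :
    S.F y = S.F x + ∫ z in Ioc x y, z ∂S.μ :=
  (setIntegral_Ioc_add_Ioc hx hxy (S.integrableOn_id.mono_set (Ioc_subset_Ioc_right hy))).symm

theorem jInt_of_le {f : ℝ → ℝ} {u : ℝ} (hu : u ≤ 1) : S.jInt f u = ∫ z in Ioc u 1, f z ∂S.μ :=
  if_pos hu

theorem jInt_const_mul (c : ℝ) (f : ℝ → ℝ) (u : ℝ) :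
    S.jInt (fun z => c * f z) u = c * S.jInt f u := by
  unfold jInt
  split_ifs <;> simp only [integral_const_mul, mul_neg]

section JIntOfMonotone

variable {S} {f : ℝ → ℝ}

theorem jInt_nonneg (hf0 : ∀ x ∈ Icc 0 1, 0 ≤ f x) {u : ℝ} (hu : u ∈ Ioc 0 1) :
    0 ≤ S.jInt f u := by
  rw [S.jInt_of_le hu.2]
  exact setIntegral_nonneg measurableSet_Ioc fun z hz => hf0 z ⟨(hu.1.trans hz.1).le, hz.2⟩

theorem antitoneOn_jInt (hf0 : ∀ x ∈ Icc 0 1, 0 ≤ f x) (hf : MonotoneOn f (Icc 0 1)) :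
    AntitoneOn (S.jInt f) (Ioc 0 1) := by
  intro u hu v hv huv
  rw [S.jInt_of_le hu.2, S.jInt_of_le hv.2, ← setIntegral_Ioc_add_Ioc huv hv.2
    (S.integrableOn_Ioc_of_monotoneOn hu.1 (hf.mono (Icc_subset_Icc hu.1.le le_rfl)))]
  have : 0 ≤ ∫ z in Ioc u v, f z ∂S.μ := setIntegral_nonneg measurableSet_Ioc fun z hz =>
    hf0 z ⟨(hu.1.trans hz.1).le, hz.2.trans hv.2⟩
  linarith

theorem intervalIntegrable_jInt (hf0 : ∀ x ∈ Icc 0 1, 0 ≤ f x) (hf : MonotoneOn f (Icc 0 1)) :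
    IntervalIntegrable (S.jInt f) volume 0 1 := by
  rw [intervalIntegrable_iff_integrableOn_Ioc_of_le zero_le_one]
  refine Integrable.mono' ((S.integrableOn_m_sub_m le_rfl).const_mul (f 1))
    (aemeasurable_restrict_of_antitoneOn measurableSet_Ioc
      (antitoneOn_jInt hf0 hf)).aestronglyMeasurable
    ((ae_restrict_iff' measurableSet_Ioc).2 (ae_of_all _ fun u hu => ?_))
  rw [Real.norm_eq_abs, abs_of_nonneg (jInt_nonneg hf0 hu), S.jInt_of_le hu.2]
  exact S.setIntegral_Ioc_le_of_monotoneOn hu.1 hu.2 (hf.mono (Icc_subset_Icc hu.1.le le_rfl))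

end JIntOfMonotone

noncomputable def signedG (k : ℕ) (x : ℝ) : ℝ := (-1) ^ k * S.G k x

theorem signedG_one : S.signedG 1 = fun x => ∫ u in 0..x, (S.m 1 - S.m u) := by
  ext x
  simp only [signedG, G, mtilde, pow_one, neg_one_mul, ← intervalIntegral.integral_neg, neg_sub]

theorem signedG_succ {k : ℕ} (hk : 1 ≤ k) :
    S.signedG (k + 1) = fun x => ∫ u in 0..x, S.jInt (S.signedG k) u := by
  obtain ⟨j, rfl⟩ : ∃ j, k = j + 1 := ⟨k - 1, by omega⟩
  have hjInt : S.jInt (S.signedG (j + 1)) = fun u => (-1) ^ (j + 1) * S.jInt (S.G (j + 1)) u :=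
    funext fun u => S.jInt_const_mul _ _ u
  ext x
  rw [hjInt, intervalIntegral.integral_const_mul, signedG, G, pow_succ]
  ring

theorem exists_signedG_eq_primitive {k : ℕ} (hk : 1 ≤ k) :
    ∃ w : ℝ → ℝ, IntervalIntegrable w volume 0 1 ∧ AntitoneOn w (Ioc 0 1) ∧
      (∀ u ∈ Ioc 0 1, 0 ≤ w u) ∧ S.signedG k = fun x => ∫ u in 0..x, w u := by
  induction k, hk using Nat.le_induction with
  | base =>
    refine ⟨_, (intervalIntegrable_iff_integrableOn_Ioc_of_le zero_le_one).2
      (S.integrableOn_m_sub_m le_rfl), fun u hu v hv huv => ?_,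
      fun u hu => sub_nonneg.2 (S.m_le_m hu.1 hu.2), S.signedG_one⟩
    linarith [S.m_le_m hu.1 huv]
  | succ k hk ih =>
    obtain ⟨w, hint, -, hw0, hrep⟩ := ih
    have hf0 : ∀ x ∈ Icc 0 1, 0 ≤ S.signedG k x := by
      rw [hrep]; exact fun x hx => primitive_nonneg hw0 hint hx
    have hf : MonotoneOn (S.signedG k) (Icc 0 1) := by
      rw [hrep]; exact monotoneOn_primitive hw0 hint
    exact ⟨_, intervalIntegrable_jInt hf0 hf, antitoneOn_jInt hf0 hf,
      fun u hu => jInt_nonneg hf0 hu, S.signedG_succ hk⟩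

theorem signedG_nonneg {k : ℕ} (hk : 1 ≤ k) {x : ℝ} (hx : x ∈ Icc 0 1) : 0 ≤ S.signedG k x := by
  obtain ⟨w, hint, -, hw0, hrep⟩ := S.exists_signedG_eq_primitive hk
  rw [hrep]
  exact primitive_nonneg hw0 hint hx

theorem monotoneOn_signedG {k : ℕ} (hk : 1 ≤ k) : MonotoneOn (S.signedG k) (Icc 0 1) := by
  obtain ⟨w, hint, -, hw0, hrep⟩ := S.exists_signedG_eq_primitive hk
  rw [hrep]
  exact monotoneOn_primitive hw0 hint

theorem mul_signedG_le {k : ℕ} (hk : 1 ≤ k) {x z : ℝ} (hx : 0 ≤ x) (hxz : x ≤ z) (hz : z ≤ 1) :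
    x * S.signedG k z ≤ z * S.signedG k x := by
  obtain ⟨w, hint, hanti, -, hrep⟩ := S.exists_signedG_eq_primitive hk
  rw [hrep]
  exact mul_primitive_le hanti hint hx hxz hz

theorem signedG_zero (k : ℕ) : S.signedG k 0 = 0 := by
  rcases k with _ | _ | k <;> simp [signedG, G]

theorem integrableOn_signedG {k : ℕ} (hk : 1 ≤ k) {a : ℝ} (ha : 0 < a) :
    IntegrableOn (S.signedG k) (Ioc a 1) S.μ :=
  S.integrableOn_Ioc_of_monotoneOn ha ((S.monotoneOn_signedG hk).mono (Icc_subset_Icc ha.le le_rfl))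

theorem jInt_signedG_le {k : ℕ} (hk : 1 ≤ k) {u x : ℝ} (hu : 0 < u) (hux : u ≤ x) (hx1 : x ≤ 1) :
    S.jInt (S.signedG k) u ≤
      S.signedG k x * (S.m x - S.m u) + ∫ z in Ioc x 1, S.signedG k z ∂S.μ := by
  rw [S.jInt_of_le (hux.trans hx1),
    ← setIntegral_Ioc_add_Ioc hux hx1 (S.integrableOn_signedG hk hu)]
  exact add_le_add_left (S.setIntegral_Ioc_le_of_monotoneOn hu hux
    ((S.monotoneOn_signedG hk).mono (Icc_subset_Icc hu.le hx1))) _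

theorem signedG_succ_le {k : ℕ} (hk : 1 ≤ k) {x : ℝ} (hx : 0 ≤ x) (hx1 : x ≤ 1) :
    S.signedG (k + 1) x ≤
      S.signedG k x * S.F x + x * ∫ z in Ioc x 1, S.signedG k z ∂S.μ := by
  set I := ∫ z in Ioc x 1, S.signedG k z ∂S.μ
  have hm : IntervalIntegrable (fun u => S.m x - S.m u) volume 0 x :=
    (intervalIntegrable_iff_integrableOn_Ioc_of_le hx).2 (S.integrableOn_m_sub_m hx1)
  calc S.signedG (k + 1) x = ∫ u in 0..x, S.jInt (S.signedG k) u := by rw [S.signedG_succ hk]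
    _ ≤ ∫ u in 0..x, (S.signedG k x * (S.m x - S.m u) + I) :=
        intervalIntegral.integral_mono_on_of_le_Ioo hx
          ((intervalIntegrable_jInt (fun _ hz => S.signedG_nonneg hk hz)
            (S.monotoneOn_signedG hk)).of_subinterval le_rfl hx hx1)
          ((hm.const_mul _).add intervalIntegrable_const)
          fun u hu => S.jInt_signedG_le hk hu.1 hu.2.le hx1
    _ = S.signedG k x * S.F x + x * I := by
        rw [intervalIntegral.integral_add (hm.const_mul _) intervalIntegrable_const,
          intervalIntegral.integral_const_mul, S.integral_m_sub_m hx hx1,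
          intervalIntegral.integral_const, smul_eq_mul, sub_zero]

theorem mul_setIntegral_signedG_le {k : ℕ} (hk : 1 ≤ k) {x y : ℝ} (hx : 0 < x) (hy : y ≤ 1) :
    x * ∫ z in Ioc x y, S.signedG k z ∂S.μ ≤ S.signedG k x * ∫ z in Ioc x y, z ∂S.μ := by
  rw [← integral_const_mul, ← integral_const_mul]
  refine setIntegral_mono_on (((S.integrableOn_signedG hk hx).mono_set
    (Ioc_subset_Ioc_right hy)).const_mul x)
    ((S.integrableOn_id.mono_set (Ioc_subset_Ioc hx.le hy)).const_mul _) measurableSet_Ioc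
    fun z hz => ?_
  rw [mul_comm (S.signedG k x)]
  exact S.mul_signedG_le hk hx.le hz.1.le (hz.2.trans hy)

theorem signedG_succ_le_of_le {k : ℕ} (hk : 1 ≤ k) {x y : ℝ} (hx : 0 ≤ x) (hxy : x ≤ y)
    (hy : y ≤ 1) :
    S.signedG (k + 1) x ≤
      S.signedG k x * S.F y + x * ∫ z in Ioc y 1, S.signedG k z ∂S.μ := by
  rcases hx.eq_or_lt with rfl | hx0
  · simp [signedG_zero]
  have hsucc := S.signedG_succ_le hk hx (hxy.trans hy)
  have hmid := S.mul_setIntegral_signedG_le hk hx0 hy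
  rw [← setIntegral_Ioc_add_Ioc hxy hy (S.integrableOn_signedG hk hx0)] at hsucc
  rw [S.F_eq_add hx hxy hy]
  linarith [mul_add x (∫ z in Ioc x y, S.signedG k z ∂S.μ) (∫ z in Ioc y 1, S.signedG k z ∂S.μ),
    mul_add (S.signedG k x) (S.F x) (∫ z in Ioc x y, z ∂S.μ)]

end MString

theorem stmt8 (S : MString) (k : ℕ) (hk : 1 ≤ k) (x y : ℝ) (hx : 0 ≤ x) (hxy : x ≤ y)
    (hy : y ≤ 1) :
    0 ≤ (-1 : ℝ) ^ (k + 1) * MString.G S (k + 1) x ∧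
    (-1 : ℝ) ^ (k + 1) * MString.G S (k + 1) x
      ≤ (-1 : ℝ) ^ k * MString.G S k x * MString.F S y
        + x * ∫ z in Set.Ioc y 1, (-1 : ℝ) ^ k * MString.G S k z ∂S.μ ∧
    (-1 : ℝ) ^ (k + 1) * MString.G S (k + 1) x
      ≤ (-1 : ℝ) ^ k * MString.G S k x * MString.F S 1 := by
  refine ⟨S.signedG_nonneg (by omega) ⟨hx, hxy.trans hy⟩, S.signedG_succ_le_of_le hk hx hxy hy, ?_⟩
  simpa [MString.signedG] using S.signedG_succ_le_of_le hk hx (hxy.trans hy) le_rfl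
end
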